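/- Away from the poles, the two generative Fermat spirals of opposite chirality intersect exactly at the Fibonacci lattice points: if real parameters t, s ∈ (−N − 1/2, N + 1/2) satisfy γ₊(t) = γ₋(s) as points of the unit sphere, then t = s and t is an integer (so the common point is the lattice point p_t); conversely γ₊(i) = γ₋(i) = p_i for every integer i ∈ {−N, …, N}. -/
import Mathlib


open Real

/-- The golden ratio `φ = (1 + √5)/2`. -/
noncomputable def phi : ℝ := (1 + Real.sqrt 5) / 2

/-- Latitude along the generative spirals: `λ(t) = arcsin (2t/(2N+1))`. -/
noncomputable def spiralLat (N : ℕ) (t : ℝ) : ℝ :=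
  Real.arcsin (2 * t / (2 * (N : ℝ) + 1))

/-- Point of the unit sphere with latitude `λ` and longitude `μ`. -/
noncomputable def spherePt (lam mu : ℝ) : ℝ × ℝ × ℝ :=
  (Real.cos lam * Real.cos mu, Real.cos lam * Real.sin mu, Real.sin lam)

/-- The generative Fermat spiral turning eastwards by the complement of the golden
angle: longitude `2πt·φ⁻¹`. -/
noncomputable def gammaPlus (N : ℕ) (t : ℝ) : ℝ × ℝ × ℝ :=
  spherePt (spiralLat N t) (2 * Real.pi * t * phi⁻¹)

/-- The generative Fermat spiral of opposite chirality, turning by the golden angle: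
longitude `−2πt·φ⁻²`. -/
noncomputable def gammaMinus (N : ℕ) (t : ℝ) : ℝ × ℝ × ℝ :=
  spherePt (spiralLat N t) (-(2 * Real.pi * t * (phi⁻¹) ^ 2))

lemma phi_inv_add_sq : phi⁻¹ + (phi⁻¹) ^ 2 = 1 := by
  have h5 : Real.sqrt 5 ^ 2 = 5 := Real.sq_sqrt (by norm_num)
  have hs : Real.sqrt 5 ≥ 0 := Real.sqrt_nonneg 5
  have hpos : (0:ℝ) < phi := by unfold phi; linarith
  have hne : phi ≠ 0 := ne_of_gt hpos
  have hphi : phi ^ 2 = phi + 1 := by unfold phi; nlinarith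
  field_simp
  nlinarith [hphi]

/-- Away from the poles, the two generative Fermat spirals of opposite chirality
intersect exactly at the Fibonacci lattice points: if
`t, s ∈ (−N − 1/2, N + 1/2)` satisfy `γ₊(t) = γ₋(s)` then `t = s` and `t` is an
integer; conversely `γ₊(i) = γ₋(i)` for every integer `i ∈ {−N, …, N}` (and this
common point is the Fibonacci lattice point `p i`). -/
theorem spirals_intersect_at_fibonacci_points (N : ℕ) :
    (∀ t ∈ Set.Ioo (-(N : ℝ) - 1/2) ((N : ℝ) + 1/2),
      ∀ s ∈ Set.Ioo (-(N : ℝ) - 1/2) ((N : ℝ) + 1/2),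
        gammaPlus N t = gammaMinus N s → t = s ∧ ∃ i : ℤ, t = (i : ℝ)) ∧
    ∀ i : ℤ, i ∈ Set.Icc (-(N : ℤ)) (N : ℤ) →
      gammaPlus N ((i : ℝ)) = gammaMinus N ((i : ℝ)) := by
  have hphi1 : phi⁻¹ + (phi⁻¹) ^ 2 = 1 := phi_inv_add_sq
  have hD : (0:ℝ) < 2 * (N:ℝ) + 1 := by positivity
  have hπ : (0:ℝ) < Real.pi := Real.pi_pos
  constructor
  · rintro t ⟨ht1, ht2⟩ s ⟨hs1, hs2⟩ heq
    have hxt1 : -1 < 2 * t / (2 * (N:ℝ) + 1) := by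
      rw [lt_div_iff₀ hD]; linarith
    have hxt2 : 2 * t / (2 * (N:ℝ) + 1) < 1 := by
      rw [div_lt_one hD]; linarith
    have hxs1 : -1 < 2 * s / (2 * (N:ℝ) + 1) := by
      rw [lt_div_iff₀ hD]; linarith
    have hxs2 : 2 * s / (2 * (N:ℝ) + 1) < 1 := by
      rw [div_lt_one hD]; linarith
    have h3 : Real.sin (spiralLat N t) = Real.sin (spiralLat N s) :=
      congrArg (fun p : ℝ × ℝ × ℝ => p.2.2) heq
    have hts : t = s := by
      unfold spiralLat at h3
      rw [Real.sin_arcsin (le_of_lt hxt1) (le_of_lt hxt2),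
        Real.sin_arcsin (le_of_lt hxs1) (le_of_lt hxs2)] at h3
      field_simp at h3
      linarith
    subst hts
    have hcpos : 0 < Real.cos (spiralLat N t) := by
      unfold spiralLat
      rw [Real.cos_arcsin]
      apply Real.sqrt_pos.mpr
      nlinarith
    have hcne : Real.cos (spiralLat N t) ≠ 0 := ne_of_gt hcpos
    have h1 : Real.cos (spiralLat N t) * Real.cos (2 * Real.pi * t * phi⁻¹)
        = Real.cos (spiralLat N t) * Real.cos (-(2 * Real.pi * t * (phi⁻¹) ^ 2)) :=
      congrArg (fun p : ℝ × ℝ × ℝ => p.1) heq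
    have h2 : Real.cos (spiralLat N t) * Real.sin (2 * Real.pi * t * phi⁻¹)
        = Real.cos (spiralLat N t) * Real.sin (-(2 * Real.pi * t * (phi⁻¹) ^ 2)) :=
      congrArg (fun p : ℝ × ℝ × ℝ => p.2.1) heq
    have hcos := mul_left_cancel₀ hcne h1
    have hsin := mul_left_cancel₀ hcne h2
    have hA : ((2 * Real.pi * t * phi⁻¹ : ℝ) : Real.Angle)
        = ((-(2 * Real.pi * t * (phi⁻¹) ^ 2) : ℝ) : Real.Angle) := by
      apply Real.Angle.cos_sin_inj
      · exact hcos
      · exact hsin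
    rw [Real.Angle.angle_eq_iff_two_pi_dvd_sub] at hA
    obtain ⟨k, hk⟩ := hA
    refine ⟨rfl, k, ?_⟩
    have h2pi : (2 * Real.pi) ≠ 0 := by positivity
    have : 2 * Real.pi * t = 2 * Real.pi * (k:ℝ) := by
      have e : 2 * Real.pi * t * phi⁻¹ - -(2 * Real.pi * t * (phi⁻¹) ^ 2)
          = 2 * Real.pi * t * (phi⁻¹ + (phi⁻¹) ^ 2) := by ring
      rw [e, hphi1, mul_one] at hk
      linarith [hk]
    exact mul_left_cancel₀ h2pi this
  · intro i _
    have key : 2 * Real.pi * (i:ℝ) * phi⁻¹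
        = -(2 * Real.pi * (i:ℝ) * (phi⁻¹) ^ 2) + (i:ℝ) * (2 * Real.pi) := by
      linear_combination 2 * Real.pi * (i:ℝ) * hphi1
    unfold gammaPlus gammaMinus spherePt
    refine Prod.ext ?_ (Prod.ext ?_ rfl) <;> simp only []
    · rw [key]
      rw [show ((i:ℝ) * (2 * Real.pi)) = ((i:ℤ):ℝ) * (2 * Real.pi) by push_cast; ring]
      rw [Real.cos_add_int_mul_two_pi]
    · rw [key]
      rw [show ((i:ℝ) * (2 * Real.pi)) = ((i:ℤ):ℝ) * (2 * Real.pi) by push_cast; ring]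
      rw [Real.sin_add_int_mul_two_pi]
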